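/- Suppose v is a vertex in a forest F of order n. If ⌈(n+1)/(α_v+1)⌉ > 3, then deg(v) ≥ α_v + 4. -/

import Mathlib

open SimpleGraph Finset

variable {V : Type*}

/-- A stable (independent) set of vertices. -/
def IsStable (G : SimpleGraph V) (S : Finset V) : Prop :=
  ∀ x ∈ S, ∀ y ∈ S, ¬G.Adj x y

/-- Stability (independence) number. -/
noncomputable def stabNum (G : SimpleGraph V) [Fintype V] : ℕ :=
  sSup {n | ∃ S : Finset V, IsStable G S ∧ S.card = n}

/-- `x`-stability number: max size of a stable set containing `x`. -/
noncomputable def stabNumAt (G : SimpleGraph V) [Fintype V] (x : V) : ℕ :=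
  sSup {n | ∃ S : Finset V, IsStable G S ∧ x ∈ S ∧ S.card = n}

/-- Stability number of the subgraph induced on a vertex set `s`. -/
noncomputable def stabNumOn (G : SimpleGraph V) (s : Set V) : ℕ :=
  sSup {n | ∃ S : Finset V, ↑S ⊆ s ∧ IsStable G S ∧ S.card = n}

/-- `G` admits an equitable `k`-coloring. -/
def EquitablyColorable (G : SimpleGraph V) [Fintype V] (k : ℕ) : Prop :=
  ∃ c : V → Fin k, (∀ a b, G.Adj a b → c a ≠ c b) ∧
    ∀ i j : Fin k,
      (Finset.univ.filter fun v => c v = i).card ≤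
        (Finset.univ.filter fun v => c v = j).card + 1

/-- Equitable chromatic number. -/
noncomputable def eqChromNum (G : SimpleGraph V) [Fintype V] : ℕ :=
  sInf {k | EquitablyColorable G k}

lemma IsStable.insert [DecidableEq V] {G : SimpleGraph V} {S : Finset V} {v : V}
    (hS : IsStable G S) (hv : ∀ y ∈ S, ¬G.Adj v y) :
    IsStable G (insert v S) := by
  intro x hx y hy hxy
  rcases Finset.mem_insert.mp hx with rfl | hxS <;> rcases Finset.mem_insert.mp hy with rfl | hyS
  · exact G.irrefl hxy
  · exact hv y hyS hxy
  · exact hv x hxS hxy.symm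
  · exact hS x hxS y hyS hxy

lemma IsStable.card_le_stabNumAt [Fintype V] {G : SimpleGraph V} {S : Finset V} {x : V}
    (hS : IsStable G S) (hx : x ∈ S) :
    #S ≤ stabNumAt G x := by
  refine le_csSup ⟨Fintype.card V, ?_⟩ ⟨S, hS, hx, rfl⟩
  rintro n ⟨T, -, -, rfl⟩
  exact card_le_univ T

namespace SimpleGraph

variable {G : SimpleGraph V}

/-- Pigeonhole on the colour classes: the largest one meets `A` in at least `#A / k` vertices. -/
lemma Colorable.exists_isStable_subset {k : ℕ} (hG : G.Colorable k) (A : Finset V) :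
    ∃ S ⊆ A, IsStable G S ∧ #A ≤ k * #S := by
  classical
  obtain ⟨C⟩ := hG
  rcases A.eq_empty_or_nonempty with rfl | ⟨a, -⟩
  · exact ⟨∅, subset_refl _, fun _ h => absurd h (notMem_empty _), by simp⟩
  obtain ⟨i, -, hi⟩ := (univ : Finset (Fin k)).exists_max_image
    (fun j => #{x ∈ A | C x = j}) ⟨C a, mem_univ _⟩
  refine ⟨{x ∈ A | C x = i}, filter_subset _ _, ?_, ?_⟩
  · intro x hx y hy hxy
    exact C.valid hxy ((mem_filter.mp hx).2.trans (mem_filter.mp hy).2.symm)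
  · calc #A = ∑ j, #{x ∈ A | C x = j} := card_eq_sum_card_fiberwise fun _ _ => mem_univ _
      _ ≤ ∑ _j : Fin k, #{x ∈ A | C x = i} := sum_le_sum fun j _ => hi j (mem_univ _)
      _ = k * #{x ∈ A | C x = i} := by simp

/-- A large stable set among the non-neighbours of `v`, together with `v`, bounds `stabNumAt G v`
from below. -/
lemma Colorable.card_add_le_degree_add_mul_stabNumAt [Fintype V] [DecidableRel G.Adj] {k : ℕ}
    (hG : G.Colorable k) (v : V) :
    Fintype.card V + k ≤ G.degree v + 1 + k * stabNumAt G v := by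
  classical
  set A := (insert v (G.neighborFinset v))ᶜ
  obtain ⟨S, hSA, hS, hAS⟩ := hG.exists_isStable_subset A
  have hSv : ∀ y ∈ S, y ≠ v ∧ ¬G.Adj v y := fun y hy => by simpa [A] using hSA hy
  have hvS : v ∉ S := fun hv => (hSv v hv).1 rfl
  have hα : #S + 1 ≤ stabNumAt G v := by
    rw [← card_insert_of_notMem hvS]
    exact (hS.insert fun y hy => (hSv y hy).2).card_le_stabNumAt (mem_insert_self v S)
  have hcardA : #A + (G.degree v + 1) = Fintype.card V := by
    rw [← card_compl_add_card (insert v (G.neighborFinset v)), card_insert_of_notMem (by simp),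
      card_neighborFinset_eq_degree]
  have := Nat.mul_le_mul_left k hα
  rw [mul_add_one] at this
  omega

end SimpleGraph

theorem stmt6 [Fintype V] (F : SimpleGraph V) [DecidableRel F.Adj]
    (hF : F.IsAcyclic) (v : V)
    (h : 3 < ⌈((Fintype.card V : ℚ) + 1) / ((stabNumAt F v : ℚ) + 1)⌉) :
    F.degree v ≥ stabNumAt F v + 4 := by
  have hn : 3 * (stabNumAt F v + 1) < Fintype.card V + 1 := by
    have h3 := Int.lt_ceil.mp h
    rw [lt_div_iff₀ (by positivity)] at h3
    exact_mod_cast h3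
  have := hF.colorable_two.card_add_le_degree_add_mul_stabNumAt v
  omega
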